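/- Let n, Δ ≥ 2 be integers and let ξ ∈ (0,1) satisfy 1 - ξ^Δ ≥ ξ. Then f(n, Δ) ≥ f(⌊ξ n⌋, Δ - 1), where f(m, d) denotes the largest k such that every m × m bipartite graph whose vertices in one part all have degree at most d contains a bi-hole of size k. -/

import Mathlib

def BiHole (n k : ℕ) (G : Fin n → Fin n → Prop) : Prop :=
  ∃ X Y : Finset (Fin n), X.card = k ∧ Y.card = k ∧
    ∀ a ∈ X, ∀ b ∈ Y, ¬ G a b

noncomputable def degA {n : ℕ} (G : Fin n → Fin n → Prop) (a : Fin n) : ℕ :=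
  Nat.card {b : Fin n // G a b}

/-- `f(n, Δ)`: the largest `k` such that every `n × n` bipartite graph whose
vertices in one part all have degree at most `Δ` contains a bi-hole of size `k`. -/
noncomputable def f (n Δ : ℕ) : ℕ :=
  sSup {k | ∀ G : Fin n → Fin n → Prop, (∀ a, degA G a ≤ Δ) → BiHole n k G}

/-!
Let `m = ⌊ξ n⌋` and pick an `m`-set `B` in the second part uniformly at random. A vertex `a` of
the first part has `Δ` neighbours in `B` only if its whole neighbourhood, of size `Δ`, lies in `B`,
which happens with probability at most `(m / n) ^ Δ ≤ ξ ^ Δ ≤ 1 - ξ`. So for some `B` at most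
`n - m` vertices have `Δ` neighbours in `B`, and `m` of the others together with `B` span an
`m × m` graph of left degree at most `Δ - 1`, whose bi-hole of size `f(m, Δ - 1)` is a bi-hole
of the whole graph.
-/

open Finset

theorem Nat.descFactorial_mul_pow_le {m n : ℕ} (hmn : m ≤ n) :
    ∀ d : ℕ, m.descFactorial d * n ^ d ≤ n.descFactorial d * m ^ d
  | 0 => by simp
  | d + 1 => by
    have hstep : (m - d) * n ≤ (n - d) * m := by
      rw [Nat.sub_mul, Nat.sub_mul, Nat.mul_comm n m]
      exact Nat.sub_le_sub_left (Nat.mul_le_mul_left d hmn) _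
    calc m.descFactorial (d + 1) * n ^ (d + 1)
        = ((m - d) * n) * (m.descFactorial d * n ^ d) := by
          rw [Nat.descFactorial_succ, pow_succ]; ring
      _ ≤ ((n - d) * m) * (n.descFactorial d * m ^ d) :=
          Nat.mul_le_mul hstep (Nat.descFactorial_mul_pow_le hmn d)
      _ = n.descFactorial (d + 1) * m ^ (d + 1) := by
          rw [Nat.descFactorial_succ, pow_succ]; ring

theorem Nat.choose_mul_pow_le {m n : ℕ} (hmn : m ≤ n) (d : ℕ) :
    m.choose d * n ^ d ≤ n.choose d * m ^ d := by
  have h := Nat.descFactorial_mul_pow_le hmn d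
  rw [Nat.descFactorial_eq_factorial_mul_choose, Nat.descFactorial_eq_factorial_mul_choose,
    mul_assoc, mul_assoc] at h
  exact Nat.le_of_mul_le_mul_left h d.factorial_pos

section Averaging

variable {α : Type*} [Fintype α] [DecidableEq α]

theorem card_filter_powersetCard_superset_mul_pow_le (s : Finset α) {m : ℕ}
    (hm : m ≤ Fintype.card α) :
    #{S ∈ powersetCard m univ | s ⊆ S} * Fintype.card α ^ #s
      ≤ (Fintype.card α).choose m * m ^ #s := by
  set n := Fintype.card α
  by_cases hsm : #s ≤ m
  · have hcount := card_filter_powersetCard_subset s univ m (subset_univ s) hsm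
    rw [card_univ] at hcount
    rw [hcount]
    have hsn : #s ≤ n := card_le_univ s
    refine Nat.le_of_mul_le_mul_right ?_ (Nat.choose_pos hsn)
    calc (n - #s).choose (m - #s) * n ^ #s * n.choose #s
        = n.choose m * (m.choose #s * n ^ #s) := by
          rw [← mul_assoc, Nat.choose_mul (n := n) hsm]; ring
      _ ≤ n.choose m * (n.choose #s * m ^ #s) :=
          Nat.mul_le_mul_left _ (Nat.choose_mul_pow_le hm _)
      _ = n.choose m * m ^ #s * n.choose #s := by ring
  · have hempty : {S ∈ powersetCard m (univ : Finset α) | s ⊆ S} = ∅ := by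
      refine filter_eq_empty_iff.mpr fun S hS hsS => hsm ?_
      exact (card_le_card hsS).trans (mem_powersetCard.mp hS).2.le
    simp [hempty]

theorem card_filter_powersetCard_le_card_inter_mul_pow_le {s : Finset α} {d m : ℕ}
    (hs : #s ≤ d) (hm : m ≤ Fintype.card α) :
    #{S ∈ powersetCard m univ | d ≤ #(s ∩ S)} * Fintype.card α ^ d
      ≤ (Fintype.card α).choose m * m ^ d := by
  obtain hlt | rfl := hs.lt_or_eq
  · have hempty : {S ∈ powersetCard m (univ : Finset α) | d ≤ #(s ∩ S)} = ∅ :=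
      filter_eq_empty_iff.mpr fun S _ hd => by
        have := card_le_card (inter_subset_left : s ∩ S ⊆ s); omega
    simp [hempty]
  · refine le_trans (Nat.mul_le_mul_right _ (card_le_card ?_))
      (card_filter_powersetCard_superset_mul_pow_le s hm)
    exact monotone_filter_right _ fun S _ hS =>
      inter_eq_left.mp (eq_of_subset_of_card_le inter_subset_left hS)

theorem exists_mem_powersetCard_card_saturated_mul_pow_le {ι : Type*} [Fintype ι]
    (N : ι → Finset α) {d m : ℕ} (hN : ∀ i, #(N i) ≤ d) (hm : m ≤ Fintype.card α) :
    ∃ S ∈ powersetCard m univ,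
      #{i : ι | d ≤ #(N i ∩ S)} * Fintype.card α ^ d ≤ Fintype.card ι * m ^ d := by
  set P := powersetCard m (univ : Finset α)
  have hP : P.Nonempty := powersetCard_nonempty.mpr (by simpa using hm)
  refine exists_le_of_sum_le hP ?_
  calc ∑ S ∈ P, #{i : ι | d ≤ #(N i ∩ S)} * Fintype.card α ^ d
      = ∑ i, #{S ∈ P | d ≤ #(N i ∩ S)} * Fintype.card α ^ d := by
        rw [← sum_mul, ← sum_mul]
        exact congrArg (· * _) (sum_card_bipartiteAbove_eq_sum_card_bipartiteBelow _).symm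
    _ ≤ ∑ _i : ι, (Fintype.card α).choose m * m ^ d :=
        sum_le_sum fun i _ => card_filter_powersetCard_le_card_inter_mul_pow_le (hN i) hm
    _ = ∑ _S ∈ P, Fintype.card ι * m ^ d := by
        simp only [sum_const, card_univ, smul_eq_mul, P, card_powersetCard]; ring

end Averaging

theorem degA_eq_card_filter {n : ℕ} (G : Fin n → Fin n → Prop) (a : Fin n)
    [DecidablePred (G a)] : degA G a = #{b | G a b} := by
  rw [degA, Nat.card_eq_fintype_card, Fintype.card_subtype]

theorem bddAbove_setOf_biHole (m d : ℕ) :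
    BddAbove {k | ∀ G : Fin m → Fin m → Prop, (∀ a, degA G a ≤ d) → BiHole m k G} := by
  refine ⟨m, fun k hk => ?_⟩
  obtain ⟨X, -, hX, -, -⟩ := hk (fun _ _ => False) fun a => by simp [degA]
  simpa [hX] using card_le_univ X

theorem biHole_f {m d : ℕ} {G : Fin m → Fin m → Prop} (hG : ∀ a, degA G a ≤ d) :
    BiHole m (f m d) G :=
  Nat.sSup_mem ⟨0, fun _ _ => ⟨∅, ∅, rfl, rfl, by simp⟩⟩ (bddAbove_setOf_biHole m d) G hG

theorem BiHole.of_embeddings {m n k : ℕ} {G : Fin n → Fin n → Prop} (eA eB : Fin m ↪ Fin n)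
    (h : BiHole m k fun i j => G (eA i) (eB j)) : BiHole n k G := by
  obtain ⟨X, Y, hX, hY, hXY⟩ := h
  refine ⟨X.map eA, Y.map eB, by rw [card_map, hX], by rw [card_map, hY], ?_⟩
  simp only [mem_map, forall_exists_index, and_imp]
  rintro _ i hi rfl _ j hj rfl
  exact hXY i hi j hj

theorem biHole_f_of_card_filter_le {n m d : ℕ} {G : Fin n → Fin n → Prop} [DecidableRel G]
    {A B : Finset (Fin n)} (hA : #A = m) (hB : #B = m)
    (hdeg : ∀ a ∈ A, #{b ∈ B | G a b} ≤ d) : BiHole n (f m d) G := by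
  set eA := (A.orderEmbOfFin hA).toEmbedding
  set eB := (B.orderEmbOfFin hB).toEmbedding
  refine BiHole.of_embeddings eA eB (biHole_f fun i => ?_)
  rw [degA_eq_card_filter]
  calc #{j | G (eA i) (eB j)} = #(({j | G (eA i) (eB j)} : Finset (Fin m)).map eB) :=
        (card_map _).symm
    _ ≤ #{b ∈ B | G (eA i) b} := card_le_card fun b hb => by
        obtain ⟨j, hj, rfl⟩ := mem_map.mp hb
        exact mem_filter.mpr ⟨B.orderEmbOfFin_mem hB j, (mem_filter.mp hj).2⟩
    _ ≤ d := hdeg _ (A.orderEmbOfFin_mem hA i)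

theorem floor_mul_natCast_le {n : ℕ} {ξ : ℝ} (hξ : ξ ≤ 1) : ⌊ξ * n⌋₊ ≤ n :=
  Nat.floor_le_of_le (mul_le_of_le_one_left n.cast_nonneg hξ)

theorem mul_floor_mul_pow_le {n Δ : ℕ} {ξ : ℝ} (hξ : 0 ≤ ξ) (hξΔ : ξ ≤ 1 - ξ ^ Δ) :
    n * ⌊ξ * n⌋₊ ^ Δ ≤ (n - ⌊ξ * n⌋₊) * n ^ Δ := by
  set m := ⌊ξ * n⌋₊
  have hmn : m ≤ n := floor_mul_natCast_le (by linarith [pow_nonneg hξ Δ])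
  have hmξ : (m : ℝ) ≤ ξ * n := Nat.floor_le (by positivity)
  have key : (n : ℝ) * m ^ Δ ≤ (n - m) * n ^ Δ :=
    calc (n : ℝ) * m ^ Δ ≤ n * (ξ ^ Δ * n ^ Δ) := by
          rw [← mul_pow]; gcongr
      _ ≤ n * ((1 - ξ) * n ^ Δ) := by gcongr; linarith
      _ ≤ (n - m) * n ^ Δ := by nlinarith [pow_nonneg (n.cast_nonneg : (0 : ℝ) ≤ n) Δ]
  rw [← Nat.cast_sub hmn] at key
  exact_mod_cast key

theorem f_recursion_general (n Δ : ℕ) (hn : 2 ≤ n)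
    (ξ : ℝ) (hξ : ξ ∈ Set.Ioo (0 : ℝ) 1) (hξΔ : ξ ≤ 1 - ξ ^ Δ) :
    f (⌊ξ * n⌋₊) (Δ - 1) ≤ f n Δ := by
  classical
  have hmn := floor_mul_natCast_le (n := n) hξ.2.le
  have hcount := mul_floor_mul_pow_le (n := n) hξ.1.le hξΔ
  set m := ⌊ξ * n⌋₊
  refine le_csSup (bddAbove_setOf_biHole n Δ) fun G hG => ?_
  set N : Fin n → Finset (Fin n) := fun a => {b | G a b}
  obtain ⟨B, hB, hsat⟩ := exists_mem_powersetCard_card_saturated_mul_pow_le N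
    (fun a => (degA_eq_card_filter G a).symm.trans_le (hG a)) (by simpa using hmn)
  simp only [Fintype.card_fin] at hsat
  have hbad : #{a | Δ ≤ #(N a ∩ B)} ≤ n - m :=
    Nat.le_of_mul_le_mul_right (hsat.trans hcount) (pow_pos (by omega) Δ)
  have hgood : m ≤ #{a | #(N a ∩ B) < Δ} := by
    have := card_filter_add_card_filter_not (s := univ) fun a => Δ ≤ #(N a ∩ B)
    simp only [not_le, card_univ, Fintype.card_fin] at this
    omega
  obtain ⟨A, hAgood, hA⟩ := exists_subset_card_eq hgood
  refine biHole_f_of_card_filter_le hA (mem_powersetCard.mp hB).2 fun a ha => ?_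
  have := (mem_filter.mp (hAgood ha)).2
  rw [filter_inter, univ_inter] at this
  omega

/-- if `ξ ∈ (0,1)` satisfies `1 - ξ^Δ ≥ ξ`, then
`f(n, Δ) ≥ f(⌊ξ n⌋, Δ - 1)`. -/
theorem f_recursion (n Δ : ℕ) (hn : 2 ≤ n) (hΔ : 2 ≤ Δ)
    (ξ : ℝ) (hξ : ξ ∈ Set.Ioo (0 : ℝ) 1) (hξΔ : ξ ≤ 1 - ξ ^ Δ) :
    f (⌊ξ * n⌋₊) (Δ - 1) ≤ f n Δ :=
  f_recursion_general n Δ hn ξ hξ hξΔ
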